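/- arXiv:2110.13804 — 3 statements merged into one kernel-verified Lean document; each statement's English description precedes it below -/
import Mathlib

section
/- Let φ₁,…,φ_N be independent centered Gaussian random variables with common variance σ², and define the beamforming gain G = (1/N)·|∑_{n=1}^N exp(j φ_n)|². Then E[G] = 1 + (N-1)·e^{-σ²}. -/
/-!
Expanding the square, `‖∑ₙ Zₙ‖² = ∑ₙ ∑ₘ Zₙ · conj Zₘ` with `Zₙ = exp (i φₙ)`. The diagonal terms are
identically `1`; by independence each of the `N (N - 1)` off-diagonal terms has expectation
`‖E Z‖² = ‖φ̂(1)‖² = e^{-σ²}`, where `φ̂(t) = e^{-σ² t² / 2}` is the Gaussian characteristic function.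
-/

open MeasureTheory ProbabilityTheory Complex ComplexConjugate
open scoped NNReal

lemma sum_sum_ite_eq_one_else {ι R : Type*} [Fintype ι] [DecidableEq ι] [CommRing R] (a : R) :
    (∑ i : ι, ∑ j : ι, if i = j then 1 else a) =
      Fintype.card ι + Fintype.card ι * (Fintype.card ι - 1) * a := by
  have hsplit : ∀ i j : ι, (if i = j then 1 else a) = a + if i = j then 1 - a else 0 := by
    intro i j; split_ifs <;> ring
  simp only [hsplit, Finset.sum_add_distrib, Finset.sum_ite_eq, Finset.mem_univ, if_true,
    Finset.sum_const, Finset.card_univ, nsmul_eq_mul]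
  ring

lemma norm_sum_sq_eq_sum_sum_mul_conj {ι 𝕜 : Type*} [Fintype ι] [RCLike 𝕜] (z : ι → 𝕜) :
    (‖∑ i, z i‖ ^ 2 : 𝕜) = ∑ i, ∑ j, z i * conj (z j) := by
  rw [← RCLike.mul_conj, map_sum, Finset.sum_mul_sum]

section UnitModulus

variable {Ω ι 𝕜 : Type*} [MeasurableSpace Ω] {P : Measure Ω} [IsProbabilityMeasure P]
  [RCLike 𝕜] {Z : ι → Ω → 𝕜}

lemma integral_mul_conj_of_norm_eq_one (hZ : ∀ i, AEStronglyMeasurable (Z i) P)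
    (hind : iIndepFun Z P) (hnorm : ∀ i ω, ‖Z i ω‖ = 1) {c : 𝕜}
    (hmean : ∀ i, ∫ ω, Z i ω ∂P = c) (i j : ι) [Decidable (i = j)] :
    ∫ ω, Z i ω * conj (Z j ω) ∂P = if i = j then 1 else (‖c‖ ^ 2 : 𝕜) := by
  split_ifs with hij
  · subst hij
    simp [RCLike.mul_conj, hnorm]
  · have hind_ij : IndepFun (Z i) (conj ∘ Z j) P :=
      (hind.indepFun hij).comp measurable_id (RCLike.continuous_conj.measurable)
    refine (hind_ij.integral_fun_mul_eq_mul_integral (hZ i)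
      (RCLike.continuous_conj.comp_aestronglyMeasurable (hZ j))).trans ?_
    simp only [Function.comp_def, integral_conj, hmean, RCLike.mul_conj]

theorem integral_norm_sum_sq_of_norm_eq_one [Fintype ι]
    (hZ : ∀ i, AEStronglyMeasurable (Z i) P)
    (hind : iIndepFun Z P) (hnorm : ∀ i ω, ‖Z i ω‖ = 1) {c : 𝕜}
    (hmean : ∀ i, ∫ ω, Z i ω ∂P = c) :
    ∫ ω, ‖∑ i, Z i ω‖ ^ 2 ∂P =
      Fintype.card ι + Fintype.card ι * (Fintype.card ι - 1) * ‖c‖ ^ 2 := by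
  classical
  have hint : ∀ i j, Integrable (fun ω => Z i ω * conj (Z j ω)) P := fun i j =>
    Integrable.of_bound ((hZ i).mul (RCLike.continuous_conj.comp_aestronglyMeasurable (hZ j))) 1
      (ae_of_all _ fun ω => by simp [hnorm])
  apply RCLike.ofReal_injective (K := 𝕜)
  rw [← integral_ofReal]
  push_cast
  simp_rw [norm_sum_sq_eq_sum_sum_mul_conj]
  rw [integral_finsetSum _ fun i _ => integrable_finsetSum _ fun j _ => hint i j]
  simp_rw [integral_finsetSum _ fun j _ => hint _ j,
    integral_mul_conj_of_norm_eq_one hZ hind hnorm hmean]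
  exact sum_sum_ite_eq_one_else _

end UnitModulus

lemma integral_cexp_I_mul_of_map_eq_gaussianReal {Ω : Type*} [MeasurableSpace Ω] {P : Measure Ω}
    {X : Ω → ℝ} {m : ℝ} {v : ℝ≥0} (hX : P.map X = gaussianReal m v) :
    ∫ ω, cexp (I * X ω) ∂P = cexp (m * I - v / 2) := by
  have hXm : AEMeasurable X P := aemeasurable_of_map_neZero (by rw [hX]; infer_instance)
  rw [← integral_map (f := fun x : ℝ => cexp (I * x)) hXm (by fun_prop), hX]
  simpa [charFun_apply, mul_comm I] using charFun_gaussianReal (μ := m) (v := v) 1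

theorem bf_gain_mean_general
    {Ω : Type*} [MeasurableSpace Ω] {P : Measure Ω} [IsProbabilityMeasure P]
    (N : ℕ) (hN : 1 ≤ N) (σ2 : ℝ≥0) (φ : Fin N → Ω → ℝ)
    (hindep : iIndepFun φ P)
    (hgauss : ∀ i, Measure.map (φ i) P = gaussianReal 0 σ2) :
    (∫ ω, (1 / (N : ℝ)) *
        (‖∑ n : Fin N, Complex.exp (Complex.I * (φ n ω : ℂ))‖)^2 ∂P)
      = 1 + ((N : ℝ) - 1) * Real.exp (-(σ2 : ℝ)) := by
  have hmean : ∀ n, ∫ ω, cexp (I * φ n ω) ∂P = (Real.exp (-σ2 / 2) : ℂ) := fun n => by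
    simp [integral_cexp_I_mul_of_map_eq_gaussianReal (hgauss n), neg_div]
  -- `P.map f = 0` unless `f` is a.e.-measurable, so `hgauss` already forces measurability.
  have hmeas : ∀ n, AEStronglyMeasurable (fun ω => cexp (I * φ n ω)) P := fun n =>
    (by fun_prop : Continuous fun x : ℝ => cexp (I * x)).comp_aestronglyMeasurable
      (aemeasurable_of_map_neZero (by rw [hgauss n]; infer_instance)).aestronglyMeasurable
  have hind : iIndepFun (fun n ω => cexp (I * φ n ω)) P :=
    hindep.comp (fun _ x => cexp (I * x)) fun _ => by fun_prop
  rw [integral_const_mul, integral_norm_sum_sq_of_norm_eq_one hmeas hind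
    (fun n ω => by simp [mul_comm I]) hmean]
  have hN0 : (N : ℝ) ≠ 0 := Nat.cast_ne_zero.mpr (by omega)
  rw [Fintype.card_fin, Complex.norm_real, Real.norm_of_nonneg (Real.exp_pos _).le,
    sq, ← Real.exp_add, add_halves]
  field_simp

theorem bf_gain_mean
    {Ω : Type*} [MeasurableSpace Ω] {P : Measure Ω} [IsProbabilityMeasure P]
    (N : ℕ) (hN : 1 ≤ N) (σ2 : ℝ≥0) (φ : Fin N → Ω → ℝ)
    (hmeas : ∀ i, Measurable (φ i))
    (hindep : iIndepFun φ P)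
    (hgauss : ∀ i, Measure.map (φ i) P = gaussianReal 0 σ2) :
    (∫ ω, (1 / (N : ℝ)) *
        (‖∑ n : Fin N, Complex.exp (Complex.I * (φ n ω : ℂ))‖)^2 ∂P)
      = 1 + ((N : ℝ) - 1) * Real.exp (-(σ2 : ℝ)) :=
  bf_gain_mean_general N hN σ2 φ hindep hgauss
end

section
/- For any constants c₁ ∈ ℝ and c₂, c₃, c₄ ≥ 0, the function f(x) = c₁ + √(c₂ + c₃/x + c₄/x²) is convex on (0, ∞). -/
set_option maxHeartbeats 1000000

lemma kalman_aux (c2 c3 c4 : ℝ) (hc2 : 0 ≤ c2) (hc3 : 0 ≤ c3) (hc4 : 0 ≤ c4)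
    (p q a b : ℝ) (hp : 0 < p) (hq : 0 < q) (ha : 0 ≤ a) (hb : 0 ≤ b) (hab : a + b = 1) :
    Real.sqrt (c2 + c3/(a*p^2+b*q^2) + c4/(a*p^2+b*q^2)^2)
      ≤ a * Real.sqrt (c2 + c3/p^2 + c4/(p^2)^2)
        + b * Real.sqrt (c2 + c3/q^2 + c4/(q^2)^2) := by
  obtain ⟨z, hzdef⟩ : ∃ z, z = a*p^2+b*q^2 := ⟨_, rfl⟩
  rw [← hzdef]
  have hz : 0 < z := by
    rw [hzdef]
    rcases le_total (p^2) (q^2) with h | h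
    · nlinarith [mul_pos hp hp]
    · nlinarith [mul_pos hq hq]
  have hgx : 0 ≤ c2 + c3/p^2 + c4/(p^2)^2 := by positivity
  have hgy : 0 ≤ c2 + c3/q^2 + c4/(q^2)^2 := by positivity
  have hM : 0 ≤ c2 + c3/(p*q) + c4/(p*q)^2 := by positivity
  -- Cauchy-Schwarz step
  have hcs : c2 + c3/(p*q) + c4/(p*q)^2
      ≤ Real.sqrt ((c2 + c3/p^2 + c4/(p^2)^2) * (c2 + c3/q^2 + c4/(q^2)^2)) := by
    have hD : 0 ≤ (c2*c3*(p*q*(p-q))^2 + c2*c4*(p^2-q^2)^2 + c3*c4*(p-q)^2) / (p^4*q^4) := by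
      positivity
    have hprod : (c2 + c3/p^2 + c4/(p^2)^2) * (c2 + c3/q^2 + c4/(q^2)^2) =
        ((c2 + c3/(p*q) + c4/(p*q)^2)^2) +
        (c2*c3*(p*q*(p-q))^2 + c2*c4*(p^2-q^2)^2 + c3*c4*(p-q)^2) / (p^4*q^4) := by
      field_simp
      ring
    rw [hprod]
    calc c2 + c3/(p*q) + c4/(p*q)^2 = Real.sqrt ((c2 + c3/(p*q) + c4/(p*q)^2)^2) :=
          (Real.sqrt_sq hM).symm
      _ ≤ _ := Real.sqrt_le_sqrt (by linarith)
  -- componentwise convexity bounds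
  have habnn : 0 ≤ a*b := mul_nonneg ha hb
  have e1 : p*q ≤ (a*p+b*q)*(a*q+b*p) := by
    have : (a*p+b*q)*(a*q+b*p) - p*q = a*b*(p-q)^2 := by
      linear_combination p*q*(a+b+1)*hab
    nlinarith [mul_nonneg habnn (sq_nonneg (p-q))]
  have e2 : (a*p+b*q)^2 ≤ z := by
    have : z - (a*p+b*q)^2 = a*b*(p-q)^2 := by
      rw [hzdef]; linear_combination (-(a*p^2+b*q^2))*hab
    nlinarith [mul_nonneg habnn (sq_nonneg (p-q))]
  have h3' : p^2*q^2 ≤ (a*q+b*p)^2 * z := by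
    calc p^2*q^2 = (p*q)^2 := by ring
      _ ≤ ((a*p+b*q)*(a*q+b*p))^2 := by
          apply pow_le_pow_left₀ (by positivity) e1
      _ = (a*q+b*p)^2 * (a*p+b*q)^2 := by ring
      _ ≤ (a*q+b*p)^2 * z := mul_le_mul_of_nonneg_left e2 (sq_nonneg _)
  have h3 : 1/z ≤ (a/p + b/q)^2 := by
    rw [show a/p + b/q = (a*q+b*p)/(p*q) by field_simp, div_pow,
      div_le_div_iff₀ hz (by positivity)]
    calc 1 * (p*q)^2 = p^2*q^2 := by ring
      _ ≤ (a*q+b*p)^2 * z := h3'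
  have h4 : 1/z ≤ a/p^2 + b/q^2 := by
    have e4 : (a*q^2+b*p^2)*z - p^2*q^2 = a*b*(p^2-q^2)^2 := by
      rw [hzdef]; linear_combination p^2*q^2*(a+b+1)*hab
    rw [show a/p^2 + b/q^2 = (a*q^2+b*p^2)/(p^2*q^2) by field_simp,
      div_le_div_iff₀ hz (by positivity)]
    nlinarith [mul_nonneg habnn (sq_nonneg (p^2-q^2))]
  have hgz_le : c2 + c3/z + c4/z^2 ≤ c2 + c3*(a/p+b/q)^2 + c4*(a/p^2+b/q^2)^2 := by
    have t3 := mul_le_mul_of_nonneg_left h3 hc3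
    have t4 : (1/z)^2 ≤ (a/p^2+b/q^2)^2 := by
      apply pow_le_pow_left₀ (by positivity) h4
    have t4' := mul_le_mul_of_nonneg_left t4 hc4
    have e : c3/z = c3*(1/z) := by ring
    have e' : c4/z^2 = c4*(1/z)^2 := by ring
    linarith
  have hRHS_eq : c2 + c3*(a/p+b/q)^2 + c4*(a/p^2+b/q^2)^2
      = a^2*(c2+c3/p^2+c4/(p^2)^2) + b^2*(c2+c3/q^2+c4/(q^2)^2)
        + 2*a*b*(c2 + c3/(p*q) + c4/(p*q)^2) := by
    have hc3eq : c3*(a/p+b/q)^2 = a^2*(c3/p^2) + b^2*(c3/q^2) + 2*a*b*(c3/(p*q)) := by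
      field_simp
      ring
    have hc4eq : c4*(a/p^2+b/q^2)^2
        = a^2*(c4/(p^2)^2) + b^2*(c4/(q^2)^2) + 2*a*b*(c4/(p*q)^2) := by
      field_simp
      ring
    linear_combination (-(c2*(a+b+1)))*hab + hc3eq + hc4eq
  have hrhs0 : 0 ≤ a * Real.sqrt (c2 + c3/p^2 + c4/(p^2)^2)
      + b * Real.sqrt (c2 + c3/q^2 + c4/(q^2)^2) := by positivity
  have hsq : c2 + c3/z + c4/z^2
      ≤ (a * Real.sqrt (c2 + c3/p^2 + c4/(p^2)^2)
        + b * Real.sqrt (c2 + c3/q^2 + c4/(q^2)^2))^2 := by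
    have s1 : Real.sqrt (c2 + c3/p^2 + c4/(p^2)^2) ^ 2 = c2 + c3/p^2 + c4/(p^2)^2 :=
      Real.sq_sqrt hgx
    have s2 : Real.sqrt (c2 + c3/q^2 + c4/(q^2)^2) ^ 2 = c2 + c3/q^2 + c4/(q^2)^2 :=
      Real.sq_sqrt hgy
    have smul : Real.sqrt (c2 + c3/p^2 + c4/(p^2)^2) * Real.sqrt (c2 + c3/q^2 + c4/(q^2)^2)
        = Real.sqrt ((c2 + c3/p^2 + c4/(p^2)^2) * (c2 + c3/q^2 + c4/(q^2)^2)) :=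
      (Real.sqrt_mul hgx _).symm
    have hcs' : c2 + c3/(p*q) + c4/(p*q)^2
        ≤ Real.sqrt (c2 + c3/p^2 + c4/(p^2)^2) * Real.sqrt (c2 + c3/q^2 + c4/(q^2)^2) := by
      rw [smul]; exact hcs
    nlinarith [mul_le_mul_of_nonneg_left hcs' habnn]
  calc Real.sqrt (c2 + c3/z + c4/z^2)
      ≤ Real.sqrt ((a * Real.sqrt (c2 + c3/p^2 + c4/(p^2)^2)
        + b * Real.sqrt (c2 + c3/q^2 + c4/(q^2)^2))^2) := Real.sqrt_le_sqrt hsq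
    _ = _ := Real.sqrt_sq hrhs0

theorem convex_kalman_variance (c1 c2 c3 c4 : ℝ)
    (hc2 : 0 ≤ c2) (hc3 : 0 ≤ c3) (hc4 : 0 ≤ c4) :
    ConvexOn ℝ (Set.Ioi 0)
      (fun x : ℝ => c1 + Real.sqrt (c2 + c3 / x + c4 / x^2)) := by
  constructor
  · exact convex_Ioi 0
  · intro x hx y hy a b ha hb hab
    rw [Set.mem_Ioi] at hx hy
    simp only [smul_eq_mul]
    obtain ⟨p, hp0, rfl⟩ : ∃ p, 0 < p ∧ x = p^2 :=
      ⟨Real.sqrt x, Real.sqrt_pos.mpr hx, (Real.sq_sqrt hx.le).symm⟩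
    obtain ⟨q, hq0, rfl⟩ : ∃ q, 0 < q ∧ y = q^2 :=
      ⟨Real.sqrt y, Real.sqrt_pos.mpr hy, (Real.sq_sqrt hy.le).symm⟩
    have key := kalman_aux c2 c3 c4 hc2 hc3 hc4 p q a b hp0 hq0 ha hb hab
    have hc1 : a*c1 + b*c1 = c1 := by linear_combination c1*hab
    ring_nf
    ring_nf at key hc1
    linarith [key, hc1]
end

section
/- Let q > 0 and r > 0 and define the map T(p) = r·p/(p + r) + q on (0, ∞). Then T is a monotone increasing map, T maps (0,∞) into (q, q + r), and iterates p_{k+1} = T(p_k) from any initial p₀ > 0 converge to the unique fixed point p* = (q + q√(1 + 4r/q))/2. -/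
open Filter Topology

theorem riccati_iteration_converges (q r : ℝ) (hq : 0 < q) (hr : 0 < r) :
    let T : ℝ → ℝ := fun p => r * p / (p + r) + q
    MonotoneOn T (Set.Ioi 0) ∧
    (∀ p : ℝ, 0 < p → T p ∈ Set.Ioo q (q + r)) ∧
    (∀ p0 : ℝ, 0 < p0 →
      Tendsto (fun k : ℕ => T^[k] p0) atTop
        (nhds ((q + q * Real.sqrt (1 + 4 * r / q)) / 2))) := by
  intro T
  have hTdiff : ∀ a b : ℝ, 0 < a → 0 < b →
      T b - T a = r ^ 2 * (b - a) / ((a + r) * (b + r)) := by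
    intro a b ha hb
    have ha' : a + r ≠ 0 := by positivity
    have hb' : b + r ≠ 0 := by positivity
    simp only [T]
    field_simp
    ring
  have hmono : MonotoneOn T (Set.Ioi 0) := by
    intro a ha b hb hab
    have ha' : 0 < a := Set.mem_Ioi.mp ha
    have hb' : 0 < b := Set.mem_Ioi.mp hb
    have h := hTdiff a b ha' hb'
    have h1 : 0 ≤ r ^ 2 * (b - a) / ((a + r) * (b + r)) := by
      apply div_nonneg
      · nlinarith [sq_nonneg r]
      · have : 0 < (a + r) * (b + r) := by positivity
        linarith
    simp only [T] at h ⊢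
    linarith
  have hmem : ∀ p : ℝ, 0 < p → T p ∈ Set.Ioo q (q + r) := by
    intro p hp
    have hpr : 0 < p + r := by linarith
    constructor
    · have : 0 < r * p / (p + r) := by positivity
      simp only [T]; linarith
    · have : r * p / (p + r) < r := by
        rw [div_lt_iff₀ hpr]; nlinarith
      simp only [T]; linarith
  refine ⟨hmono, hmem, ?_⟩
  intro p0 hp0
  set s : ℝ := Real.sqrt (q ^ 2 + 4 * q * r) with hs_def
  have hs_nonneg : 0 ≤ s := Real.sqrt_nonneg _
  have hs2 : s ^ 2 = q ^ 2 + 4 * q * r := Real.sq_sqrt (by positivity)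
  have hs_gt : q < s := by nlinarith
  set pstar : ℝ := (q + s) / 2 with hpstar_def
  have hpstar_gt : q < pstar := by
    simp only [hpstar_def]; linarith
  have hpstar_pos : 0 < pstar := by linarith
  have hps : pstar ^ 2 = q * pstar + q * r := by
    simp only [hpstar_def]; nlinarith
  have hfix : T pstar = pstar := by
    have hpr : pstar + r ≠ 0 := by positivity
    simp only [T]
    field_simp
    nlinarith
  -- match the stated limit with pstar
  have htarget : (q + q * Real.sqrt (1 + 4 * r / q)) / 2 = pstar := by
    have hq' : q ≠ 0 := ne_of_gt hq
    have h1 : q ^ 2 * (1 + 4 * r / q) = q ^ 2 + 4 * q * r := by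
      field_simp
    have h2 : q * Real.sqrt (1 + 4 * r / q) = s := by
      rw [hs_def, ← h1, Real.sqrt_mul (by positivity), Real.sqrt_sq hq.le]
    rw [h2]
  rw [htarget]
  -- contraction constant
  set L : ℝ := r ^ 2 / (q + r) ^ 2 with hL_def
  have hL0 : 0 ≤ L := by positivity
  have hL1 : L < 1 := by
    rw [hL_def, div_lt_one (by positivity)]
    nlinarith
  have hcontr : ∀ a b : ℝ, q < a → q < b → |T b - T a| ≤ L * |b - a| := by
    intro a b ha hb
    have ha' : 0 < a := lt_trans hq ha
    have hb' : 0 < b := lt_trans hq hb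
    have hd : 0 < (a + r) * (b + r) := by positivity
    rw [hTdiff a b ha' hb', abs_div, abs_of_pos hd, abs_mul,
      abs_of_nonneg (sq_nonneg r), div_le_iff₀ hd]
    have h2 : (q + r) ^ 2 ≤ (a + r) * (b + r) := by nlinarith
    have hLq : L * (q + r) ^ 2 = r ^ 2 := by
      rw [hL_def]; field_simp
    have hnn : 0 ≤ L * |b - a| := mul_nonneg hL0 (abs_nonneg _)
    have key : L * |b - a| * (q + r) ^ 2 ≤ L * |b - a| * ((a + r) * (b + r)) :=
      mul_le_mul_of_nonneg_left h2 hnn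
    have heq : L * |b - a| * (q + r) ^ 2 = r ^ 2 * |b - a| := by
      rw [← hLq]; ring
    linarith
  set p1 : ℝ := T p0 with hp1_def
  have hp1_gt : q < p1 := (hmem p0 hp0).1
  have hiter : ∀ k : ℕ, q < T^[k] p1 := by
    intro k
    induction k with
    | zero => simpa using hp1_gt
    | succ n ih =>
      rw [Function.iterate_succ_apply']
      exact (hmem _ (lt_trans hq ih)).1
  have hbd : ∀ k : ℕ, |T^[k] p1 - pstar| ≤ L ^ k * |p1 - pstar| := by
    intro k
    induction k with
    | zero => simp
    | succ n ih =>
      rw [Function.iterate_succ_apply']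
      calc |T (T^[n] p1) - pstar| = |T (T^[n] p1) - T pstar| := by rw [hfix]
        _ ≤ L * |T^[n] p1 - pstar| := hcontr pstar (T^[n] p1) hpstar_gt (hiter n)
        _ ≤ L * (L ^ n * |p1 - pstar|) := by
            exact mul_le_mul_of_nonneg_left ih hL0
        _ = L ^ (n + 1) * |p1 - pstar| := by ring
  have hLlim : Tendsto (fun k : ℕ => L ^ k * |p1 - pstar|) atTop (nhds 0) := by
    simpa using (tendsto_pow_atTop_nhds_zero_of_lt_one hL0 hL1).mul_const |p1 - pstar|
  have h0 : Tendsto (fun k : ℕ => T^[k] p1) atTop (nhds pstar) := by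
    rw [tendsto_iff_dist_tendsto_zero]
    apply squeeze_zero (fun k => dist_nonneg) (fun k => ?_) hLlim
    rw [Real.dist_eq]
    exact hbd k
  have hshift : Tendsto (fun k : ℕ => T^[k + 1] p0) atTop (nhds pstar) := by
    simpa [Function.iterate_succ_apply, hp1_def] using h0
  exact (tendsto_add_atTop_iff_nat 1).mp hshift
end
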